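/- For every state ρ on ℂ^d ⊗ ℂ^d one has D(ρ) ≤ √(2(d−1)/d), and this maximal value is attained: for the state ρ₀ = |1⟩⟨1| ⊗ 𝟙/d (the state representative of the completely positive trace-preserving map ρ ↦ Tr[ρ]·|1⟩⟨1| describing spontaneous decay), D(ρ₀) = √(2(d−1)/d). -/

import Mathlib

open scoped BigOperators Matrix Kronecker ComplexOrder

noncomputable section

/-- Partial trace over the second tensor factor. -/
def ptrace2 (d : ℕ) (ρ : Matrix (Fin d × Fin d) (Fin d × Fin d) ℂ) :
    Matrix (Fin d) (Fin d) ℂ :=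
  Matrix.of fun i k => ∑ j, ρ (i, j) (k, j)

/-- The rank-one projector |ψ⟩⟨ψ|. -/
def outer {n : Type*} [Fintype n] (ψ : n → ℂ) : Matrix n n ℂ :=
  Matrix.of fun p q => ψ p * star (ψ q)

/-- Frobenius (Hilbert-Schmidt) norm of a complex matrix. -/
def frobNorm {m n : Type*} [Fintype m] [Fintype n] (X : Matrix m n ℂ) : ℝ :=
  Real.sqrt (∑ i, ∑ j, Complex.normSq (X i j))

/-- The distance functional D. -/
def DD (d : ℕ) (ρ : Matrix (Fin d × Fin d) (Fin d × Fin d) ℂ) : ℝ :=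
  sInf { x : ℝ | ∃ (n : ℕ) (p : Fin n → ℝ) (ψ : Fin n → (Fin d × Fin d) → ℂ),
    (∀ j, 0 ≤ p j) ∧ (∑ j, p j = 1) ∧
    (∀ j, ∑ q, Complex.normSq (ψ j q) = 1) ∧
    ρ = ∑ j, (p j : ℂ) • outer (ψ j) ∧
    x = ∑ j, p j * (Real.sqrt 2 * frobNorm (ptrace2 d (outer (ψ j)) - (d : ℂ)⁻¹ • 1)) }

/-!
For a unit vector `ψ`, write `M` for `ψ` reshaped into a `d × d` matrix; then
`σ = Tr₂ |ψ⟩⟨ψ| = M Mᴴ`, so `‖σ‖_F ≤ ‖M‖_F ² = 1`, and since `tr σ = 1`,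
`‖σ - 𝟙/d‖_F ² = ‖σ‖_F ² - 1/d ≤ (d - 1)/d`. A spectral decomposition of `ρ` therefore bounds
`D(ρ)`. In every decomposition of `|1⟩⟨1| ⊗ 𝟙/d` the pure states with positive weight are
supported on `|1⟩ ⊗ ℂ^d`, so their reduced states are all `|1⟩⟨1|`, which attains the bound.
-/

section Frobenius

variable {l m n : Type*} [Fintype l] [Fintype m] [Fintype n]

attribute [local instance] Matrix.frobeniusNormedAddCommGroup

lemma frobNorm_sq (X : Matrix m n ℂ) : frobNorm X ^ 2 = ∑ i, ∑ j, Complex.normSq (X i j) :=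
  Real.sq_sqrt <| Finset.sum_nonneg fun _ _ => Finset.sum_nonneg fun _ _ => Complex.normSq_nonneg _

lemma frobNorm_eq_norm (X : Matrix m n ℂ) : frobNorm X = ‖X‖ := by
  simp [frobNorm, Matrix.frobenius_norm_def, Real.sqrt_eq_rpow, Complex.normSq_eq_norm_sq]

lemma frobNorm_mul_le (A : Matrix l m ℂ) (B : Matrix m n ℂ) :
    frobNorm (A * B) ≤ frobNorm A * frobNorm B := by
  simpa only [frobNorm_eq_norm] using Matrix.frobenius_norm_mul A B

lemma frobNorm_conjTranspose (X : Matrix m n ℂ) : frobNorm Xᴴ = frobNorm X := by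
  simpa only [frobNorm_eq_norm] using Matrix.frobenius_norm_conjTranspose X

lemma frobNorm_sub_smul_one_sq [DecidableEq n] (σ : Matrix n n ℂ) (c : ℝ) :
    frobNorm (σ - (c : ℂ) • 1) ^ 2
      = frobNorm σ ^ 2 - 2 * c * σ.trace.re + Fintype.card n * c ^ 2 := by
  have hentry : ∀ i k, Complex.normSq ((σ - (c : ℂ) • 1) i k)
      = Complex.normSq (σ i k) + if i = k then c ^ 2 - 2 * c * (σ i i).re else 0 := by
    intro i k
    by_cases h : i = k
    · subst h
      simp only [Matrix.sub_apply, Matrix.smul_apply, Matrix.one_apply_eq, smul_eq_mul, mul_one,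
        Complex.normSq_sub, Complex.normSq_ofReal, Complex.conj_ofReal, Complex.mul_re,
        Complex.ofReal_re, Complex.ofReal_im, mul_zero, sub_zero, if_true]
      ring
    · simp [h]
  simp only [frobNorm_sq, hentry, Finset.sum_add_distrib, Finset.sum_ite_eq, Finset.mem_univ,
    if_true, Finset.sum_sub_distrib, Matrix.trace, Matrix.diag, Complex.re_sum, ← Finset.mul_sum]
  simp only [Finset.sum_const, Finset.card_univ, nsmul_eq_mul]
  ring

end Frobenius

lemma trace_outer {n : Type*} [Fintype n] (ψ : n → ℂ) :
    (outer ψ).trace = ∑ q, (Complex.normSq (ψ q) : ℂ) := by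
  simp [Matrix.trace, outer, Complex.mul_conj]

lemma outer_single {n : Type*} [Fintype n] [DecidableEq n] (q : n) :
    outer (Pi.single q 1) = Matrix.single q q (1 : ℂ) := by
  ext i k
  by_cases hi : i = q <;> by_cases hk : k = q <;> simp [outer, hi, hk, Ne.symm]

lemma Matrix.single_kronecker_one {l m n : Type*} [Fintype n] [DecidableEq l] [DecidableEq m]
    [DecidableEq n] (i : l) (j : m) (c : ℂ) :
    Matrix.single i j c ⊗ₖ (1 : Matrix n n ℂ) = ∑ x, Matrix.single (i, x) (j, x) c := by
  rw [← Matrix.sum_single_one]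
  change Matrix.kroneckerBilinear (R := ℂ) (Matrix.single i j c) _ = _
  rw [map_sum]
  exact Finset.sum_congr rfl fun x _ =>
    (Matrix.single_kronecker_single i j x x c 1).trans (by rw [mul_one])

section PartialTrace

variable {d : ℕ}

lemma trace_ptrace2 (ρ : Matrix (Fin d × Fin d) (Fin d × Fin d) ℂ) :
    (ptrace2 d ρ).trace = ρ.trace :=
  (Fintype.sum_prod_type fun q => ρ q q).symm

lemma ptrace2_outer (ψ : Fin d × Fin d → ℂ) :
    ptrace2 d (outer ψ) = Matrix.of (Function.curry ψ) * (Matrix.of (Function.curry ψ))ᴴ := by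
  ext i k
  simp [ptrace2, outer, Matrix.mul_apply]

lemma frobNorm_of_curry_sq (ψ : Fin d × Fin d → ℂ) :
    frobNorm (Matrix.of (Function.curry ψ)) ^ 2 = ∑ q, Complex.normSq (ψ q) := by
  rw [frobNorm_sq, Fintype.sum_prod_type]
  rfl

lemma frobNorm_ptrace2_outer_le (ψ : Fin d × Fin d → ℂ) :
    frobNorm (ptrace2 d (outer ψ)) ≤ ∑ q, Complex.normSq (ψ q) := by
  rw [ptrace2_outer, ← frobNorm_of_curry_sq ψ, sq]
  exact (frobNorm_mul_le _ _).trans_eq (by rw [frobNorm_conjTranspose])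

lemma ptrace2_outer_eq_single {ψ : Fin d × Fin d → ℂ} {z : Fin d}
    (hψ : ∑ q, Complex.normSq (ψ q) = 1) (hz : ∀ i a, i ≠ z → ψ (i, a) = 0) :
    ptrace2 d (outer ψ) = Matrix.single z z 1 := by
  have hrow : ∑ a, Complex.normSq (ψ (z, a)) = 1 := by
    rw [← hψ, Fintype.sum_prod_type]
    exact (Fintype.sum_eq_single (f := fun i => ∑ a, Complex.normSq (ψ (i, a))) z
      fun i hi => Finset.sum_eq_zero fun a _ => by simp [hz i a hi]).symm
  ext i k
  by_cases hi : i = z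
  · by_cases hk : k = z
    · subst hi hk
      simp [ptrace2, outer, Complex.mul_conj, ← Complex.ofReal_sum, hrow]
    · simp [ptrace2, outer, hz k _ hk, Ne.symm hk]
  · simp [ptrace2, outer, hz i _ hi, Ne.symm hi]

lemma frobNorm_sub_inv_smul_one_sq (hd : 0 < d) (σ : Matrix (Fin d) (Fin d) ℂ)
    (hσ : σ.trace = 1) :
    frobNorm (σ - (d : ℂ)⁻¹ • 1) ^ 2 = frobNorm σ ^ 2 - 1 / d := by
  rw [show (d : ℂ)⁻¹ = (((d : ℝ)⁻¹ : ℝ) : ℂ) by push_cast; rfl, frobNorm_sub_smul_one_sq, hσ,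
    Fintype.card_fin, Complex.one_re]
  field_simp
  ring

end PartialTrace

section PureCost

def pureCost (d : ℕ) (ψ : Fin d × Fin d → ℂ) : ℝ :=
  Real.sqrt 2 * frobNorm (ptrace2 d (outer ψ) - (d : ℂ)⁻¹ • 1)

variable {d : ℕ} {ψ : Fin d × Fin d → ℂ}

lemma sqrt_two_mul_sqrt_sub_one_div (d : ℕ) :
    Real.sqrt 2 * Real.sqrt ((d - 1) / d) = Real.sqrt (2 * (d - 1) / d) := by
  rw [← Real.sqrt_mul zero_le_two, mul_div_assoc]

lemma pureCost_le (hd : 0 < d) (hψ : ∑ q, Complex.normSq (ψ q) = 1) :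
    pureCost d ψ ≤ Real.sqrt (2 * (d - 1) / d) := by
  have htr : (ptrace2 d (outer ψ)).trace = 1 := by
    rw [trace_ptrace2, trace_outer]
    exact_mod_cast hψ
  have hσ : frobNorm (ptrace2 d (outer ψ)) ≤ 1 := hψ ▸ frobNorm_ptrace2_outer_le ψ
  rw [pureCost, ← sqrt_two_mul_sqrt_sub_one_div]
  refine mul_le_mul_of_nonneg_left (Real.le_sqrt_of_sq_le ?_) (Real.sqrt_nonneg 2)
  rw [frobNorm_sub_inv_smul_one_sq hd _ htr, sub_div, div_self (by positivity)]
  gcongr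
  exact pow_le_one₀ (Real.sqrt_nonneg _) hσ

lemma pureCost_eq_of_forall_ne {z : Fin d} (hψ : ∑ q, Complex.normSq (ψ q) = 1)
    (hz : ∀ i a, i ≠ z → ψ (i, a) = 0) :
    pureCost d ψ = Real.sqrt (2 * (d - 1) / d) := by
  have hd : 0 < d := z.pos
  have hsingle : frobNorm (Matrix.single z z (1 : ℂ)) ^ 2 = 1 := by
    rw [frobNorm_sq, Fintype.sum_eq_single z, Fintype.sum_eq_single z] <;>
      intros <;> simp_all [eq_comm]
  have h := frobNorm_sub_inv_smul_one_sq hd _ (Matrix.trace_single_eq_same z (1 : ℂ))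
  rw [hsingle] at h
  rw [pureCost, ptrace2_outer_eq_single hψ hz, ← sqrt_two_mul_sqrt_sub_one_div, sub_div,
    div_self (by positivity), ← h]
  congr 1
  exact (Real.sqrt_sq (Real.sqrt_nonneg _)).symm

end PureCost

structure IsPureDecomposition {ι n : Type*} [Fintype ι] [Fintype n] (ρ : Matrix n n ℂ)
    (p : ι → ℝ) (ψ : ι → n → ℂ) : Prop where
  nonneg : ∀ j, 0 ≤ p j
  sum_eq_one : ∑ j, p j = 1
  normalized : ∀ j, ∑ q, Complex.normSq (ψ j q) = 1
  eq_sum : ρ = ∑ j, (p j : ℂ) • outer (ψ j)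

namespace IsPureDecomposition

variable {ι κ n : Type*} [Fintype ι] [Fintype κ] [Fintype n] {ρ : Matrix n n ℂ} {p : ι → ℝ}
  {ψ : ι → n → ℂ}

lemma comp_equiv (h : IsPureDecomposition ρ p ψ) (e : κ ≃ ι) :
    IsPureDecomposition ρ (p ∘ e) (ψ ∘ e) where
  nonneg j := h.nonneg (e j)
  sum_eq_one := (e.sum_comp p).trans h.sum_eq_one
  normalized j := h.normalized (e j)
  eq_sum := h.eq_sum.trans (e.sum_comp fun j => (p j : ℂ) • outer (ψ j)).symm

lemma sum_mul_le (h : IsPureDecomposition ρ p ψ) {c : ι → ℝ} {V : ℝ} (hc : ∀ j, c j ≤ V) :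
    ∑ j, p j * c j ≤ V :=
  calc ∑ j, p j * c j ≤ ∑ j, p j * V :=
        Finset.sum_le_sum fun j _ => mul_le_mul_of_nonneg_left (hc j) (h.nonneg j)
    _ = V := by rw [← Finset.sum_mul, h.sum_eq_one, one_mul]

lemma sum_mul_eq (h : IsPureDecomposition ρ p ψ) {c : ι → ℝ} {V : ℝ}
    (hc : ∀ j, p j ≠ 0 → c j = V) : ∑ j, p j * c j = V :=
  calc ∑ j, p j * c j = ∑ j, p j * V :=
        Finset.sum_congr rfl fun j _ => by
          rcases eq_or_ne (p j) 0 with hj | hj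
          · simp [hj]
          · rw [hc j hj]
    _ = V := by rw [← Finset.sum_mul, h.sum_eq_one, one_mul]

/-- `ρ q q = ∑ j, p j |ψ j q|²` is a sum of nonnegative terms. -/
lemma apply_eq_zero (h : IsPureDecomposition ρ p ψ) {q : n} (hq : ρ q q = 0) {j : ι}
    (hj : p j ≠ 0) : ψ j q = 0 := by
  have hsum : ∑ j, p j * Complex.normSq (ψ j q) = 0 := by
    have := h.eq_sum ▸ hq
    simp only [Matrix.sum_apply, Matrix.smul_apply, outer, Matrix.of_apply, Complex.star_def,
      Complex.mul_conj, smul_eq_mul, ← Complex.ofReal_mul, ← Complex.ofReal_sum] at this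
    exact_mod_cast this
  have := (Finset.sum_eq_zero_iff_of_nonneg fun j _ =>
    mul_nonneg (h.nonneg j) (Complex.normSq_nonneg _)).mp hsum j (Finset.mem_univ j)
  exact Complex.normSq_eq_zero.mp ((mul_eq_zero.mp this).resolve_left hj)

end IsPureDecomposition

lemma Matrix.PosSemidef.exists_isPureDecomposition {n : Type*} [Fintype n] [DecidableEq n]
    {ρ : Matrix n n ℂ} (hρ : ρ.PosSemidef) (htr : ρ.trace = 1) :
    ∃ (p : n → ℝ) (ψ : n → n → ℂ), IsPureDecomposition ρ p ψ := by
  refine ⟨hρ.isHermitian.eigenvalues, fun j => hρ.isHermitian.eigenvectorBasis j,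
    hρ.eigenvalues_nonneg, ?_, fun j => ?_, ?_⟩
  · have h := congrArg Complex.re (hρ.isHermitian.trace_eq_sum_eigenvalues.symm.trans htr)
    simpa using h
  · have h := hρ.isHermitian.eigenvectorBasis.orthonormal.1 j
    rw [EuclideanSpace.norm_eq, Real.sqrt_eq_one] at h
    simpa [Complex.normSq_eq_norm_sq] using h
  · conv_lhs => rw [hρ.isHermitian.spectral_theorem]
    ext q₁ q₂
    simp only [Complex.coe_algebraMap, Unitary.conjStarAlgAut_apply, Matrix.mul_apply,
      Matrix.diagonal_apply, Matrix.IsHermitian.eigenvectorUnitary_apply, Function.comp_apply,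
      mul_ite, mul_zero, Finset.sum_ite_eq', Finset.mem_univ, if_true, Matrix.star_apply,
      RCLike.star_def, outer, Matrix.smul_of, Complex.coe_smul, Matrix.sum_apply,
      Matrix.of_apply, Pi.smul_apply, Complex.real_smul]
    exact Finset.sum_congr rfl fun _ _ => by ring

lemma isPureDecomposition_single_kronecker {d : ℕ} (z : Fin d) :
    IsPureDecomposition (Matrix.single z z (1 : ℂ) ⊗ₖ ((d : ℂ)⁻¹ • (1 : Matrix (Fin d) (Fin d) ℂ)))
      (fun _ => (d : ℝ)⁻¹) (fun j => Pi.single (z, j) 1) where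
  nonneg _ := by positivity
  sum_eq_one := by simp [z.pos.ne']
  normalized j := by simp [Pi.single_apply, apply_ite]
  eq_sum := by
    simp only [outer_single, Complex.ofReal_inv, Complex.ofReal_natCast, ← Finset.smul_sum,
      Matrix.kronecker_smul, Matrix.single_kronecker_one]

section DD

variable {d : ℕ} {ρ : Matrix (Fin d × Fin d) (Fin d × Fin d) ℂ}

lemma DD_eq_sInf :
    DD d ρ = sInf {x | ∃ (n : ℕ) (p : Fin n → ℝ) (ψ : Fin n → Fin d × Fin d → ℂ),
      IsPureDecomposition ρ p ψ ∧ x = ∑ j, p j * pureCost d (ψ j)} := by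
  refine congrArg sInf (Set.ext fun x => ⟨?_, ?_⟩)
  · rintro ⟨n, p, ψ, h0, h1, h2, h3, hx⟩
    exact ⟨n, p, ψ, ⟨h0, h1, h2, h3⟩, hx⟩
  · rintro ⟨n, p, ψ, ⟨h0, h1, h2, h3⟩, hx⟩
    exact ⟨n, p, ψ, h0, h1, h2, h3, hx⟩

lemma IsPureDecomposition.DD_le {ι : Type*} [Fintype ι] {p : ι → ℝ} {ψ : ι → Fin d × Fin d → ℂ}
    (h : IsPureDecomposition ρ p ψ) : DD d ρ ≤ ∑ j, p j * pureCost d (ψ j) := by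
  rw [DD_eq_sInf]
  refine csInf_le ⟨0, ?_⟩ ⟨_, _, _, h.comp_equiv (Fintype.equivFin ι).symm, ?_⟩
  · rintro _ ⟨n, p, ψ, h, rfl⟩
    exact Finset.sum_nonneg fun j _ =>
      mul_nonneg (h.nonneg j) (mul_nonneg (Real.sqrt_nonneg _) (Real.sqrt_nonneg _))
  · exact ((Fintype.equivFin ι).symm.sum_comp fun j => p j * pureCost d (ψ j)).symm

lemma DD_eq_of_forall_pureCost_eq {V : ℝ}
    (hne : ∃ (n : ℕ) (p : Fin n → ℝ) (ψ : Fin n → Fin d × Fin d → ℂ), IsPureDecomposition ρ p ψ)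
    (hV : ∀ (n : ℕ) (p : Fin n → ℝ) (ψ : Fin n → Fin d × Fin d → ℂ),
      IsPureDecomposition ρ p ψ → ∀ j, p j ≠ 0 → pureCost d (ψ j) = V) :
    DD d ρ = V := by
  obtain ⟨n, p, ψ, h⟩ := hne
  rw [DD_eq_sInf, ← csInf_singleton V]
  congr 1
  refine Set.eq_singleton_iff_unique_mem.mpr ⟨⟨n, p, ψ, h, (h.sum_mul_eq (hV n p ψ h)).symm⟩, ?_⟩
  rintro _ ⟨n, p, ψ, h, rfl⟩
  exact h.sum_mul_eq (hV n p ψ h)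

end DD

/-- D is bounded by √(2(d−1)/d), and the bound is attained by the state
|1⟩⟨1| ⊗ 𝟙/d, the state representative of the spontaneous-decay channel. -/
theorem DD_le_max_value_and_attained
    (d : ℕ) (hd : 0 < d)
    (ρ : Matrix (Fin d × Fin d) (Fin d × Fin d) ℂ)
    (hρ : ρ.PosSemidef) (hρtr : ρ.trace = 1) :
    DD d ρ ≤ Real.sqrt (2 * (d - 1) / d) ∧
    DD d ((Matrix.single (⟨0, hd⟩ : Fin d) (⟨0, hd⟩ : Fin d) (1 : ℂ)) ⊗ₖ
        ((d : ℂ)⁻¹ • (1 : Matrix (Fin d) (Fin d) ℂ)))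
      = Real.sqrt (2 * (d - 1) / d) := by
  refine ⟨?_, ?_⟩
  · obtain ⟨p, ψ, h⟩ := hρ.exists_isPureDecomposition hρtr
    exact h.DD_le.trans (h.sum_mul_le fun j => pureCost_le hd (h.normalized j))
  · set z : Fin d := ⟨0, hd⟩
    refine DD_eq_of_forall_pureCost_eq ⟨d, _, _, isPureDecomposition_single_kronecker z⟩
      fun n p ψ h j hj => pureCost_eq_of_forall_ne (z := z) (h.normalized j) fun i a hi => ?_
    exact h.apply_eq_zero (by simp [Ne.symm hi]) hj
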